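/- Let A be a unital C*-algebra, I a closed two-sided ideal of A, and (e_λ)_{λ∈Λ} a net of positive contractions in I that is an approximate unit for I (‖e_λ y − y‖ → 0 for every y ∈ I) and is quasicentral in A (‖e_λ a − a e_λ‖ → 0 for every a ∈ A). Then for any a, b ∈ A with ba − ab ∈ I, one has lim_λ ‖(1 − e_λ) b (1 − e_λ) a − a (1 − e_λ) b (1 − e_λ)‖ = 0. -/

import Mathlib

/-!
Put `f = 1 - e_λ`. The Leibniz rule expands the commutator `[f b f, a]` into
`f b [f, a] + f [b, a] f + [f, a] b f`. Here `[f, a] = [a, e_λ] → 0` by quasicentrality and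
`f [b, a] = [b, a] - e_λ [b, a] → 0` because `[b, a] ∈ I`, while `‖f‖ ≤ ‖1‖ + 1` stays bounded.
-/

open Filter Topology

/-- Positivity in the C*-sense: `a = b* b` for some `b`. -/
def CStarPositive {B : Type*} [Mul B] [Star B] (a : B) : Prop :=
  ∃ b : B, a = star b * b

section Sandwich

variable {R : Type*}

theorem mul_mul_mul_sub_mul_eq [Ring R] (f a b : R) :
    f * b * f * a - a * (f * b * f) =
      f * b * (f * a - a * f) + f * (b * a - a * b) * f + (f * a - a * f) * b * f := by
  noncomm_ring

theorem norm_mul_mul_mul_sub_mul_le [NormedRing R] (f a b : R) :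
    ‖f * b * f * a - a * (f * b * f)‖ ≤
      2 * ‖f‖ * ‖b‖ * ‖f * a - a * f‖ + ‖f * (b * a - a * b)‖ * ‖f‖ := by
  rw [mul_mul_mul_sub_mul_eq]
  calc _ ≤ ‖f * b * (f * a - a * f)‖ + ‖f * (b * a - a * b) * f‖
          + ‖(f * a - a * f) * b * f‖ := norm_add₃_le
    _ ≤ ‖f‖ * ‖b‖ * ‖f * a - a * f‖ + ‖f * (b * a - a * b)‖ * ‖f‖
          + ‖f * a - a * f‖ * ‖b‖ * ‖f‖ := by
        gcongr
        · exact norm_mul₃_le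
        · exact norm_mul_le _ _
        · exact norm_mul₃_le
    _ = _ := by ring

theorem tendsto_norm_mul_mul_mul_sub_mul [NormedRing R] {ι : Type*} {L : Filter ι}
    {f : ι → R} {C : ℝ} (hf : ∀ᶠ l in L, ‖f l‖ ≤ C) {a b : R}
    (hba : Tendsto (fun l => ‖f l * (b * a - a * b)‖) L (𝓝 0))
    (ha : Tendsto (fun l => ‖f l * a - a * f l‖) L (𝓝 0)) :
    Tendsto (fun l => ‖f l * b * f l * a - a * (f l * b * f l)‖) L (𝓝 0) := by
  have hbound : ∀ᶠ l in L, ‖f l * b * f l * a - a * (f l * b * f l)‖ ≤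
      2 * C * ‖b‖ * ‖f l * a - a * f l‖ + ‖f l * (b * a - a * b)‖ * C := by
    filter_upwards [hf] with l hl
    refine (norm_mul_mul_mul_sub_mul_le _ _ _).trans ?_
    gcongr
  refine squeeze_zero' (Eventually.of_forall fun _ => norm_nonneg _) hbound ?_
  simpa using (ha.const_mul (2 * C * ‖b‖)).add (hba.mul_const C)

end Sandwich

theorem quasicentral_approximate_unit_commutator_estimate_general
    (A : Type*) [CStarAlgebra A]
    (I : TwoSidedIdeal A)
    (Λ : Type*) [Preorder Λ]
    (e : Λ → A)
    (he_contr : ∀ l, ‖e l‖ ≤ 1)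
    (he_approx : ∀ y ∈ I, Tendsto (fun l => ‖e l * y - y‖) atTop (𝓝 0))
    (he_qc : ∀ a : A, Tendsto (fun l => ‖e l * a - a * e l‖) atTop (𝓝 0))
    (a b : A) (hab : b * a - a * b ∈ I) :
    Tendsto
      (fun l => ‖(1 - e l) * b * (1 - e l) * a - a * ((1 - e l) * b * (1 - e l))‖)
      atTop (𝓝 0) := by
  have hbdd : ∀ l, ‖1 - e l‖ ≤ ‖(1 : A)‖ + 1 :=
    fun l => (norm_sub_le _ _).trans (by gcongr; exact he_contr l)
  refine tendsto_norm_mul_mul_mul_sub_mul (Eventually.of_forall hbdd) ?_ ?_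
  · simpa [sub_mul, norm_sub_rev] using he_approx _ hab
  · simpa [sub_mul, mul_sub, norm_sub_rev] using he_qc a

theorem quasicentral_approximate_unit_commutator_estimate
    (A : Type*) [CStarAlgebra A]
    (I : TwoSidedIdeal A) (hI : IsClosed (I : Set A))
    (Λ : Type*) [Preorder Λ] [IsDirected Λ (· ≤ ·)] [Nonempty Λ]
    (e : Λ → A)
    (he_mem : ∀ l, e l ∈ I)
    (he_pos : ∀ l, CStarPositive (e l))
    (he_contr : ∀ l, ‖e l‖ ≤ 1)
    (he_approx : ∀ y ∈ I, Tendsto (fun l => ‖e l * y - y‖) atTop (𝓝 0))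
    (he_qc : ∀ a : A, Tendsto (fun l => ‖e l * a - a * e l‖) atTop (𝓝 0))
    (a b : A) (hab : b * a - a * b ∈ I) :
    Tendsto
      (fun l => ‖(1 - e l) * b * (1 - e l) * a - a * ((1 - e l) * b * (1 - e l))‖)
      atTop (𝓝 0) :=
  quasicentral_approximate_unit_commutator_estimate_general A I Λ e he_contr he_approx he_qc a b hab
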